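/- Let p, q : ℝ × ℝ → ℝ be smooth functions solving the modified Boussinesq system. Define u = 3(p − q) and v = −2p² + 6pq + 2p_x. Then (u, v) solves the Hirota–Satsuma system: u_t = −u_{xx} + (2/3) u u_x + 2 v_x and v_t = −(2/3) u_{xxx} + (2/3) u u_{xx} + (2/3) u_x v − (2/3) u v_x + v_{xx}. -/

import Mathlib

/-- Partial derivative in the first (space) variable. -/
noncomputable def pdx (f : ℝ → ℝ → ℝ) : ℝ → ℝ → ℝ := fun x t => deriv (fun x' => f x' t) x

/-- Partial derivative in the second (time) variable. -/
noncomputable def pdt (f : ℝ → ℝ → ℝ) : ℝ → ℝ → ℝ := fun x t => deriv (fun t' => f x t') t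

/-- The Hirota–Satsuma system. -/
def HirotaSatsuma (u v : ℝ → ℝ → ℝ) : Prop :=
  ∀ x t : ℝ,
    pdt u x t = -(pdx (pdx u) x t) + (2/3) * u x t * pdx u x t + 2 * pdx v x t ∧
    pdt v x t = -(2/3) * pdx (pdx (pdx u)) x t + (2/3) * u x t * pdx (pdx u) x t
      + (2/3) * pdx u x t * v x t - (2/3) * u x t * pdx v x t + pdx (pdx v) x t

/-- The good Boussinesq system. -/
def GoodBoussinesq (w h : ℝ → ℝ → ℝ) : Prop :=
  ∀ x t : ℝ,
    pdt w x t = pdx h x t ∧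
    pdt h x t + (1/3) * pdx (pdx (pdx w)) x t
      + (4/3) * pdx (fun x t => (w x t)^2) x t = 0

/-- The modified Boussinesq system. -/
def ModifiedBoussinesq (p q : ℝ → ℝ → ℝ) : Prop :=
  ∀ x t : ℝ,
    pdt p x t = 2 * pdx (fun x t => p x t * q x t) x t + pdx (pdx q) x t ∧
    pdt q x t = -(1/3) * pdx (pdx p) x t + (2/3) * p x t * pdx p x t
      - 2 * q x t * pdx q x t

def Sm (f : ℝ → ℝ → ℝ) : Prop := ContDiff ℝ (⊤ : ℕ∞) (fun s : ℝ × ℝ => f s.1 s.2)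

section basic
variable {f : ℝ → ℝ → ℝ}

lemma slice_x {E : Type*} [NormedAddCommGroup E] [NormedSpace ℝ E] {F : ℝ × ℝ → E}
    (hF : Differentiable ℝ F) (x t : ℝ) :
    HasDerivAt (fun x' => F (x', t)) (fderiv ℝ F (x, t) (1, 0)) x := by
  have h := (hF (x, t)).hasFDerivAt
  have hg : HasDerivAt (fun x' : ℝ => ((x' : ℝ), t)) ((1 : ℝ), (0 : ℝ)) x :=
    (hasDerivAt_id x).prodMk (hasDerivAt_const x t)
  exact h.comp_hasDerivAt x hg

lemma slice_t {E : Type*} [NormedAddCommGroup E] [NormedSpace ℝ E] {F : ℝ × ℝ → E}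
    (hF : Differentiable ℝ F) (x t : ℝ) :
    HasDerivAt (fun t' => F (x, t')) (fderiv ℝ F (x, t) (0, 1)) t := by
  have h := (hF (x, t)).hasFDerivAt
  have hg : HasDerivAt (fun t' : ℝ => ((x : ℝ), t')) ((0 : ℝ), (1 : ℝ)) t :=
    (hasDerivAt_const t x).prodMk (hasDerivAt_id t)
  exact h.comp_hasDerivAt t hg

lemma Sm.hdx (hf : Sm f) (x t : ℝ) : HasDerivAt (fun x' => f x' t) (pdx f x t) x := by
  have h := slice_x (hf.differentiable (by simp)) x t
  have e : pdx f x t = fderiv ℝ (fun s : ℝ × ℝ => f s.1 s.2) (x, t) (1, 0) := h.deriv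
  rw [e]; exact h

lemma Sm.hdt (hf : Sm f) (x t : ℝ) : HasDerivAt (fun t' => f x t') (pdt f x t) t := by
  have h := slice_t (hf.differentiable (by simp)) x t
  have e : pdt f x t = fderiv ℝ (fun s : ℝ × ℝ => f s.1 s.2) (x, t) (0, 1) := h.deriv
  rw [e]; exact h

lemma Sm.pdx_eq (hf : Sm f) (x t : ℝ) :
    pdx f x t = fderiv ℝ (fun s : ℝ × ℝ => f s.1 s.2) (x, t) (1, 0) :=
  (slice_x (hf.differentiable (by simp)) x t).deriv

lemma Sm.pdt_eq (hf : Sm f) (x t : ℝ) :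
    pdt f x t = fderiv ℝ (fun s : ℝ × ℝ => f s.1 s.2) (x, t) (0, 1) :=
  (slice_t (hf.differentiable (by simp)) x t).deriv

lemma Sm.dx (hf : Sm f) : Sm (pdx f) := by
  have : (fun s : ℝ × ℝ => pdx f s.1 s.2)
      = fun s : ℝ × ℝ => fderiv ℝ (fun s : ℝ × ℝ => f s.1 s.2) s (1, 0) := by
    funext s
    exact hf.pdx_eq s.1 s.2
  rw [Sm, this]
  exact (hf.fderiv_right (by simp)).clm_apply contDiff_const

lemma Sm.dt (hf : Sm f) : Sm (pdt f) := by
  have : (fun s : ℝ × ℝ => pdt f s.1 s.2)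
      = fun s : ℝ × ℝ => fderiv ℝ (fun s : ℝ × ℝ => f s.1 s.2) s (0, 1) := by
    funext s
    exact hf.pdt_eq s.1 s.2
  rw [Sm, this]
  exact (hf.fderiv_right (by simp)).clm_apply contDiff_const

/-- commutation of partial derivatives -/
lemma Sm.comm (hf : Sm f) (x t : ℝ) : pdt (pdx f) x t = pdx (pdt f) x t := by
  set F : ℝ × ℝ → ℝ := fun s => f s.1 s.2 with hFdef
  set G : ℝ × ℝ → (ℝ × ℝ →L[ℝ] ℝ) := fderiv ℝ F with hGdef
  have hG : ContDiff ℝ (⊤ : ℕ∞) G := hf.fderiv_right (by simp)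
  have hGd : Differentiable ℝ G := hG.differentiable (by simp)
  have key : ∀ v w : ℝ × ℝ, fderiv ℝ G (x, t) v w = fderiv ℝ G (x, t) w v := by
    intro v w
    exact second_derivative_symmetric (fun y => (hf.differentiable (by simp) y).hasFDerivAt)
      (hGd (x, t)).hasFDerivAt v w
  have h1 : pdt (pdx f) x t = fderiv ℝ G (x, t) (0, 1) (1, 0) := by
    have hc : HasDerivAt (fun t' => G (x, t')) (fderiv ℝ G (x, t) (0, 1)) t := slice_t hGd x t
    have := hc.clm_apply (hasDerivAt_const (𝕜 := ℝ) t ((1 : ℝ), (0 : ℝ)))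
    simp only [map_zero, add_zero] at this
    have heq : (fun t' => G (x, t') (1, 0)) = fun t' => pdx f x t' := by
      funext t'
      exact (hf.pdx_eq x t').symm
    rw [heq] at this
    exact this.deriv
  have h2 : pdx (pdt f) x t = fderiv ℝ G (x, t) (1, 0) (0, 1) := by
    have hc : HasDerivAt (fun x' => G (x', t)) (fderiv ℝ G (x, t) (1, 0)) x := slice_x hGd x t
    have := hc.clm_apply (hasDerivAt_const (𝕜 := ℝ) x ((0 : ℝ), (1 : ℝ)))
    simp only [map_zero, add_zero] at this
    have heq : (fun x' => G (x', t) (0, 1)) = fun x' => pdt f x' t := by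
      funext x'
      exact (hf.pdt_eq x' t).symm
    rw [heq] at this
    exact this.deriv
  rw [h1, h2, key]

end basic


/-- The Miura transformation from the modified Boussinesq system to the Hirota–Satsuma system. -/
theorem miura_MB_to_HS (p q : ℝ → ℝ → ℝ)
    (hp : ContDiff ℝ (⊤ : ℕ∞) (fun s : ℝ × ℝ => p s.1 s.2))
    (hq : ContDiff ℝ (⊤ : ℕ∞) (fun s : ℝ × ℝ => q s.1 s.2))
    (hMB : ModifiedBoussinesq p q) :
    HirotaSatsuma
      (fun x t => 3 * (p x t - q x t))
      (fun x t => -2 * (p x t)^2 + 6 * p x t * q x t + 2 * pdx p x t) := by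
  have Sp : Sm p := hp
  have Sq : Sm q := hq
  have Sp1 : Sm (pdx p) := Sp.dx
  have Sp2 : Sm (pdx (pdx p)) := Sp1.dx
  have Sq1 : Sm (pdx q) := Sq.dx
  have Sq2 : Sm (pdx (pdx q)) := Sq1.dx
  -- expansion lemmas for x-derivatives
  have Eu1 : pdx (fun x t => 3 * (p x t - q x t))
      = fun x t => 3 * (pdx p x t - pdx q x t) := by
    funext a b
    exact (((Sp.hdx a b).sub (Sq.hdx a b)).const_mul 3).deriv
  have Eu2 : pdx (fun x t => 3 * (pdx p x t - pdx q x t))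
      = fun x t => 3 * (pdx (pdx p) x t - pdx (pdx q) x t) := by
    funext a b
    exact (((Sp1.hdx a b).sub (Sq1.hdx a b)).const_mul 3).deriv
  have Eu3 : pdx (fun x t => 3 * (pdx (pdx p) x t - pdx (pdx q) x t))
      = fun x t => 3 * (pdx (pdx (pdx p)) x t - pdx (pdx (pdx q)) x t) := by
    funext a b
    exact (((Sp2.hdx a b).sub (Sq2.hdx a b)).const_mul 3).deriv
  have Ev1 : pdx (fun x t => -2 * (p x t)^2 + 6 * p x t * q x t + 2 * pdx p x t)
      = fun x t => -4 * p x t * pdx p x t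
          + 6 * (pdx p x t * q x t + p x t * pdx q x t) + 2 * pdx (pdx p) x t := by
    funext a b
    have H : HasDerivAt (fun x' => -2 * (p x' b)^2 + 6 * p x' b * q x' b + 2 * pdx p x' b)
        (-4 * p a b * pdx p a b
          + 6 * (pdx p a b * q a b + p a b * pdx q a b) + 2 * pdx (pdx p) a b) a := by
      have h1 := ((Sp.hdx a b).pow 2).const_mul (-2 : ℝ)
      have h2 := ((Sp.hdx a b).const_mul (6 : ℝ)).mul (Sq.hdx a b)
      have h3 := (Sp1.hdx a b).const_mul (2 : ℝ)
      refine ((h1.add h2).add h3).congr_deriv ?_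
      push_cast
      ring
    exact H.deriv
  have Ev2 : pdx (fun x t => -4 * p x t * pdx p x t
          + 6 * (pdx p x t * q x t + p x t * pdx q x t) + 2 * pdx (pdx p) x t)
      = fun x t => -4 * (pdx p x t * pdx p x t + p x t * pdx (pdx p) x t)
          + 6 * (pdx (pdx p) x t * q x t + 2 * pdx p x t * pdx q x t
              + p x t * pdx (pdx q) x t)
          + 2 * pdx (pdx (pdx p)) x t := by
    funext a b
    have H : HasDerivAt (fun x' => -4 * p x' b * pdx p x' b
          + 6 * (pdx p x' b * q x' b + p x' b * pdx q x' b) + 2 * pdx (pdx p) x' b)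
        (-4 * (pdx p a b * pdx p a b + p a b * pdx (pdx p) a b)
          + 6 * (pdx (pdx p) a b * q a b + 2 * pdx p a b * pdx q a b
              + p a b * pdx (pdx q) a b)
          + 2 * pdx (pdx (pdx p)) a b) a := by
      have h1 := ((Sp.hdx a b).const_mul (-4 : ℝ)).mul (Sp1.hdx a b)
      have h2 := (((Sp1.hdx a b).mul (Sq.hdx a b)).add
        ((Sp.hdx a b).mul (Sq1.hdx a b))).const_mul (6 : ℝ)
      have h3 := (Sp2.hdx a b).const_mul (2 : ℝ)
      refine ((h1.add h2).add h3).congr_deriv ?_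
      ring
    exact H.deriv
  -- the modified Boussinesq equations in expanded form
  have Epq : pdx (fun x t => p x t * q x t)
      = fun x t => pdx p x t * q x t + p x t * pdx q x t := by
    funext a b
    exact ((Sp.hdx a b).mul (Sq.hdx a b)).deriv
  have hpt : pdt p = fun a b => 2 * (pdx p a b * q a b + p a b * pdx q a b)
      + pdx (pdx q) a b := by
    funext a b
    rw [(hMB a b).1, Epq]
  have Eptx : pdx (fun a b => 2 * (pdx p a b * q a b + p a b * pdx q a b)
        + pdx (pdx q) a b)
      = fun a b => 2 * (pdx (pdx p) a b * q a b + 2 * pdx p a b * pdx q a b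
          + p a b * pdx (pdx q) a b) + pdx (pdx (pdx q)) a b := by
    funext a b
    have H : HasDerivAt (fun x' => 2 * (pdx p x' b * q x' b + p x' b * pdx q x' b)
          + pdx (pdx q) x' b)
        (2 * (pdx (pdx p) a b * q a b + 2 * pdx p a b * pdx q a b
          + p a b * pdx (pdx q) a b) + pdx (pdx (pdx q)) a b) a := by
      have h1 := (((Sp1.hdx a b).mul (Sq.hdx a b)).add
        ((Sp.hdx a b).mul (Sq1.hdx a b))).const_mul (2 : ℝ)
      have h2 := Sq2.hdx a b
      refine (h1.add h2).congr_deriv ?_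
      ring
    exact H.deriv
  intro x t
  have hqt : pdt q x t = -(1/3) * pdx (pdx p) x t + (2/3) * p x t * pdx p x t
      - 2 * q x t * pdx q x t := (hMB x t).2
  -- time derivatives of u and v
  have Etu : pdt (fun x t => 3 * (p x t - q x t)) x t
      = 3 * (pdt p x t - pdt q x t) :=
    (((Sp.hdt x t).sub (Sq.hdt x t)).const_mul 3).deriv
  have Etv : pdt (fun x t => -2 * (p x t)^2 + 6 * p x t * q x t + 2 * pdx p x t) x t
      = -4 * p x t * pdt p x t + 6 * (pdt p x t * q x t + p x t * pdt q x t)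
          + 2 * pdt (pdx p) x t := by
    have H : HasDerivAt (fun t' => -2 * (p x t')^2 + 6 * p x t' * q x t' + 2 * pdx p x t')
        (-4 * p x t * pdt p x t + 6 * (pdt p x t * q x t + p x t * pdt q x t)
          + 2 * pdt (pdx p) x t) t := by
      have h1 := ((Sp.hdt x t).pow 2).const_mul (-2 : ℝ)
      have h2 := ((Sp.hdt x t).const_mul (6 : ℝ)).mul (Sq.hdt x t)
      have h3 := (Sp1.hdt x t).const_mul (2 : ℝ)
      refine ((h1.add h2).add h3).congr_deriv ?_
      push_cast
      ring
    exact H.deriv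
  constructor
  · rw [Etu, Eu1, Eu2, Ev1, hpt, hqt]
    simp only []
    ring
  · rw [Etv, Eu1, Eu2, Eu3, Ev1, Ev2, Sp.comm x t, hpt, hqt, Eptx]
    simp only []
    ring
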